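/- Let S be an α-stable subordinator with index α ∈ (0,1), let θ ∈ (0, 1/α), and let p ∈ (0, α). Then for every T > 0 and every ε ∈ (0, T), E[(∫_ε^T r^{-θ-1} S_r dr)^p] ≤ E[S_1^p] · (2/T)^{θp} · T^{p/α} · Σ_{k=0}^{∞} 2^{kp(θ − 1/α)}, where the geometric series Σ_{k=0}^{∞} 2^{kp(θ − 1/α)} = 1/(1 − 2^{p(θ − 1/α)}) is finite. -/

import Mathlib

open MeasureTheory ProbabilityTheory Filter Set
open scoped ENNReal NNReal Topology

/-- An `α`-stable subordinator on a probability space `Ω`: a real-valued process with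
`S 0 = 0`, stationary independent increments, almost surely nondecreasing right-continuous
sample paths, and Laplace transform `E[exp (-λ S t)] = exp (-t λ^α)`.
The process is extended by `0` to nonpositive times, so that the a.s. path regularity on
`[0, ∞)` can be expressed as regularity of the extended path on all of `ℝ`. -/
structure StableSubordinator (Ω : Type*) [MeasureSpace Ω] [IsProbabilityMeasure (ℙ : Measure Ω)]
    (α : ℝ) where
  S : ℝ → Ω → ℝ
  measurable : ∀ t : ℝ, Measurable (S t)
  zero_of_nonpos : ∀ t : ℝ, t ≤ 0 → ∀ ω, S t ω = 0
  path : ∀ᵐ ω : Ω, Monotone (fun t => S t ω) ∧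
    ∀ x : ℝ, ContinuousWithinAt (fun t => S t ω) (Set.Ici x) x
  indep_increments : ∀ (n : ℕ) (t : Fin (n + 1) → ℝ), Monotone t → (∀ i, 0 ≤ t i) →
    iIndepFun (m := fun _ : Fin n => Real.measurableSpace)
      (fun i ω => S (t i.succ) ω - S (t i.castSucc) ω) ℙ
  stationary_increments : ∀ s t : ℝ, 0 ≤ s → s ≤ t →
    Measure.map (fun ω => S t ω - S s ω) ℙ = Measure.map (S (t - s)) ℙ
  laplace : ∀ lam : ℝ, 0 < lam → ∀ t : ℝ, 0 ≤ t →
    ∫ ω, Real.exp (-lam * S t ω) ∂ℙ = Real.exp (-t * lam ^ α)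

open Classical in
/-- The Lebesgue–Stieltjes measure induced by a nondecreasing right-continuous path
(junk value `0` if the path is not such). -/
noncomputable def pathMeasure (f : ℝ → ℝ) : Measure ℝ :=
  if h : Monotone f ∧ ∀ x : ℝ, ContinuousWithinAt f (Set.Ici x) x then
    StieltjesFunction.measure ⟨f, h.1, h.2⟩ else 0

/-!
Split `(0, T]` into the dyadic blocks `(T/2^(k+1), T/2^k]`. Since `S` is nondecreasing, the
integral over the `k`-th block is at most `(T/2^(k+1))^(-θ) S_{T/2^k}`, and since `x ↦ x^p` is
subadditive for `p ≤ 1`, the `p`-th power of the whole integral is at most the sum of the `p`-th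
powers of these bounds. Self-similarity, `E[S_t^p] = t^(p/α) E[S_1^p]`, turns the expectation of
that sum into the geometric series.

Self-similarity is read off the Laplace transform: for `0 < p < 1` the constant
`K_p = ∫_0^∞ u^(-p-1) (1 - e^(-u)) du` is positive and finite, and
`x^p K_p = ∫_0^∞ l^(-p-1) (1 - e^(-l x)) dl`, so that
`E[S_t^p] K_p = ∫_0^∞ l^(-p-1) (1 - e^(-t l^α)) dl`; the substitution `l = t^(-1/α) u` shows that
the right-hand side is `t^(p/α)` times its value at `t = 1`.
-/

lemma ENNReal.rpow_sum_le_sum_rpow {ι : Type*} (s : Finset ι) (f : ι → ℝ≥0∞) {p : ℝ}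
    (hp0 : 0 < p) (hp1 : p ≤ 1) : (∑ i ∈ s, f i) ^ p ≤ ∑ i ∈ s, f i ^ p := by
  classical
  induction s using Finset.induction_on with
  | empty => simp [ENNReal.zero_rpow_of_pos hp0]
  | insert i s hi ih =>
    rw [Finset.sum_insert hi, Finset.sum_insert hi]
    exact (ENNReal.rpow_add_le_add_rpow _ _ hp0.le hp1).trans (add_le_add_right ih _)

lemma ENNReal.rpow_tsum_le_tsum_rpow {ι : Type*} (f : ι → ℝ≥0∞) {p : ℝ} (hp0 : 0 < p)
    (hp1 : p ≤ 1) : (∑' i, f i) ^ p ≤ ∑' i, f i ^ p :=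
  le_of_tendsto' ((ENNReal.continuous_rpow_const.tendsto _).comp ENNReal.summable.hasSum)
    fun s => (ENNReal.rpow_sum_le_sum_rpow s f hp0 hp1).trans (ENNReal.sum_le_tsum s)

lemma Ioc_zero_subset_iUnion_Ioc_div_two_pow (T : ℝ) :
    Ioc 0 T ⊆ ⋃ k : ℕ, Ioc (T / 2 ^ (k + 1)) (T / 2 ^ k) := by
  intro r ⟨hr0, hrT⟩
  obtain ⟨k, hk, hk'⟩ := exists_nat_pow_near ((one_le_div hr0).2 hrT) one_lt_two
  refine mem_iUnion.2 ⟨k, ?_, ?_⟩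
  · rwa [div_lt_iff₀ (by positivity), mul_comm, ← div_lt_iff₀ hr0]
  · rwa [le_div_iff₀ (by positivity), mul_comm, ← le_div_iff₀ hr0]

lemma setLIntegral_Ioc_rpow_mul_le {f : ℝ → ℝ} (hf : Monotone f) {a b s : ℝ} (ha : 0 < a)
    (hfa : 0 ≤ f a) (hs : s ≤ 0) :
    ∫⁻ r in Ioc a b, ENNReal.ofReal (r ^ s * f r) ≤
      ENNReal.ofReal (a ^ s * f b) * ENNReal.ofReal (b - a) := by
  calc ∫⁻ r in Ioc a b, ENNReal.ofReal (r ^ s * f r)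
      ≤ ∫⁻ _ in Ioc a b, ENNReal.ofReal (a ^ s * f b) :=
        setLIntegral_mono measurable_const fun r ⟨har, hrb⟩ => ENNReal.ofReal_le_ofReal <|
          mul_le_mul (Real.rpow_le_rpow_of_nonpos ha har.le hs) (hf hrb) (hfa.trans (hf har.le))
            (Real.rpow_nonneg ha.le _)
    _ = _ := by rw [setLIntegral_const, Real.volume_Ioc]

lemma rpow_setLIntegral_Ioc_le_tsum_dyadic {f : ℝ → ℝ} (hf : Monotone f) (hf0 : ∀ x, 0 ≤ f x)
    {T θ p : ℝ} (hT : 0 < T) (hθ : -1 ≤ θ) (hp0 : 0 < p) (hp1 : p ≤ 1) :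
    (∫⁻ r in Ioc 0 T, ENNReal.ofReal (r ^ (-θ - 1) * f r)) ^ p ≤
      ∑' k : ℕ, ENNReal.ofReal ((T / 2 ^ (k + 1)) ^ (-θ * p)) *
        ENNReal.ofReal (f (T / 2 ^ k) ^ p) := by
  have hblock : ∀ k : ℕ, (∫⁻ r in Ioc (T / 2 ^ (k + 1)) (T / 2 ^ k),
      ENNReal.ofReal (r ^ (-θ - 1) * f r)) ^ p ≤ ENNReal.ofReal ((T / 2 ^ (k + 1)) ^ (-θ * p)) *
        ENNReal.ofReal (f (T / 2 ^ k) ^ p) := by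
    intro k
    set a := T / 2 ^ (k + 1)
    have ha : 0 < a := by positivity
    have hfb := hf0 (T / 2 ^ k)
    have hlen : T / 2 ^ k - a = a := by simp only [a, pow_succ]; ring
    refine (ENNReal.rpow_le_rpow (setLIntegral_Ioc_rpow_mul_le hf ha (hf0 a) (by linarith))
      hp0.le).trans_eq ?_
    rw [hlen, ← ENNReal.ofReal_mul (by positivity),
      ENNReal.ofReal_rpow_of_nonneg (by positivity) hp0.le, ← ENNReal.ofReal_mul (by positivity),
      Real.rpow_mul ha.le, ← Real.mul_rpow (by positivity) hfb]
    congr 2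
    rw [mul_right_comm, ← Real.rpow_add_one ha.ne', sub_add_cancel]
  calc (∫⁻ r in Ioc 0 T, ENNReal.ofReal (r ^ (-θ - 1) * f r)) ^ p
      ≤ (∑' k : ℕ, ∫⁻ r in Ioc (T / 2 ^ (k + 1)) (T / 2 ^ k),
          ENNReal.ofReal (r ^ (-θ - 1) * f r)) ^ p :=
        ENNReal.rpow_le_rpow ((lintegral_mono_set (Ioc_zero_subset_iUnion_Ioc_div_two_pow T)).trans
          (lintegral_iUnion_le _ _)) hp0.le
    _ ≤ _ := (ENNReal.rpow_tsum_le_tsum_rpow _ hp0 hp1).trans (ENNReal.tsum_le_tsum hblock)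

lemma hasSum_rpow_natCast_mul {b c : ℝ} (hb : 0 ≤ b) (hbc : b ^ c < 1) :
    HasSum (fun k : ℕ => b ^ ((k : ℝ) * c)) (1 - b ^ c)⁻¹ := by
  simpa only [mul_comm _ c, Real.rpow_mul_natCast hb] using
    hasSum_geometric_of_lt_one (Real.rpow_nonneg hb c) hbc

lemma dyadic_weight_eq {T : ℝ} (hT : 0 < T) (θ p α : ℝ) (k : ℕ) :
    (T / 2 ^ (k + 1)) ^ (-θ * p) * (T / 2 ^ k) ^ (p / α) =
      (2 / T) ^ (θ * p) * T ^ (p / α) * (2 : ℝ) ^ ((k : ℝ) * p * (θ - 1 / α)) := by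
  refine Real.log_injOn_pos (mem_Ioi.2 (by positivity)) (mem_Ioi.2 (by positivity)) ?_
  rw [Real.log_mul (by positivity) (by positivity), Real.log_mul (by positivity) (by positivity),
    Real.log_mul (by positivity) (by positivity), Real.log_rpow (by positivity),
    Real.log_rpow (by positivity), Real.log_rpow (by positivity), Real.log_rpow hT,
    Real.log_rpow two_pos, Real.log_div hT.ne' (by positivity), Real.log_div hT.ne' (by positivity),
    Real.log_div two_ne_zero hT.ne', Real.log_pow, Real.log_pow]
  push_cast
  ring

lemma lintegral_Ioi_comp_mul_left (g : ℝ → ℝ≥0∞) {c : ℝ} (hc : 0 < c) :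
    ∫⁻ x in Ioi 0, g (c * x) = ENNReal.ofReal c⁻¹ * ∫⁻ x in Ioi 0, g x := by
  have hemb : MeasurableEmbedding (c * ·) := (Homeomorph.mulLeft₀ c hc.ne').measurableEmbedding
  have := hemb.restrict_map volume (Ioi 0)
  rw [Real.map_volume_mul_left hc.ne', preimage_const_mul_Ioi₀ 0 hc, zero_div,
    Measure.restrict_smul, abs_of_pos (inv_pos.2 hc)] at this
  rw [← hemb.lintegral_map, ← this, lintegral_smul_measure, smul_eq_mul]

lemma lintegral_Ioi_rpow_mul_comp_mul (φ : ℝ → ℝ≥0∞) (q : ℝ) {c : ℝ} (hc : 0 < c) :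
    ∫⁻ l in Ioi 0, ENNReal.ofReal (l ^ (-q - 1)) * φ (c * l) =
      ENNReal.ofReal (c ^ q) * ∫⁻ u in Ioi 0, ENNReal.ofReal (u ^ (-q - 1)) * φ u := by
  have hpow : ∀ l ∈ Ioi (0 : ℝ), ENNReal.ofReal (l ^ (-q - 1)) =
      ENNReal.ofReal (c ^ (q + 1)) * ENNReal.ofReal ((c * l) ^ (-q - 1)) := by
    intro l hl
    rw [← ENNReal.ofReal_mul (by positivity), Real.mul_rpow hc.le (le_of_lt hl), ← mul_assoc,
      ← Real.rpow_add hc, show q + 1 + (-q - 1) = 0 by ring, Real.rpow_zero, one_mul]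
  rw [setLIntegral_congr_fun measurableSet_Ioi fun l hl => by rw [hpow l hl, mul_assoc],
    lintegral_const_mul' _ _ ENNReal.ofReal_ne_top,
    lintegral_Ioi_comp_mul_left (fun u => ENNReal.ofReal (u ^ (-q - 1)) * φ u) hc,
    ← mul_assoc, ← ENNReal.ofReal_mul (by positivity), Real.rpow_add_one hc.ne',
    mul_assoc, mul_inv_cancel₀ hc.ne', mul_one]

noncomputable def oneSubExpMellin (p : ℝ) : ℝ≥0∞ :=
  ∫⁻ u in Ioi 0, ENNReal.ofReal (u ^ (-p - 1)) * ENNReal.ofReal (1 - Real.exp (-u))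

lemma oneSubExpMellin_pos (p : ℝ) : 0 < oneSubExpMellin p := by
  rw [oneSubExpMellin, setLIntegral_pos_iff (by fun_prop)]
  have hsupp : Function.support (fun u : ℝ => ENNReal.ofReal (u ^ (-p - 1)) *
      ENNReal.ofReal (1 - Real.exp (-u))) ∩ Ioi 0 = Ioi 0 := by
    refine inter_eq_right.2 fun u (hu : 0 < u) => ?_
    have hexp : Real.exp (-u) < 1 := Real.exp_lt_one_iff.2 (neg_neg_of_pos hu)
    simp only [Function.mem_support, ne_eq, mul_eq_zero, ENNReal.ofReal_eq_zero, not_or, not_le]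
    exact ⟨Real.rpow_pos_of_pos hu _, by linarith⟩
  rw [hsupp, Real.volume_Ioi]
  exact ENNReal.zero_lt_top

lemma integrableOn_rpow_mul_one_sub_exp_neg {p : ℝ} (hp0 : 0 < p) (hp1 : p < 1) :
    IntegrableOn (fun u : ℝ => u ^ (-p - 1) * (1 - Real.exp (-u))) (Ioi 0) := by
  set g : ℝ → ℝ := fun u => u ^ (-p - 1) * (1 - Real.exp (-u))
  have hg : AEStronglyMeasurable g := by fun_prop
  have hbound : ∀ u, 0 < u → ‖g u‖ ≤ u ^ (-p - 1) * min u 1 := by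
    intro u hu
    have hexp : Real.exp (-u) ≤ 1 := Real.exp_le_one_iff.2 (neg_nonpos.2 hu.le)
    rw [Real.norm_eq_abs, abs_of_nonneg (mul_nonneg (by positivity) (by linarith))]
    refine mul_le_mul_of_nonneg_left (le_min ?_ ?_) (by positivity)
    · linarith [Real.add_one_le_exp (-u)]
    · linarith [Real.exp_pos (-u)]
  have hnear : IntegrableOn g (Ioc 0 1) := by
    refine ((intervalIntegral.intervalIntegrable_rpow' (r := -p) (by linarith)).1).mono' hg.restrict
      ((ae_restrict_mem measurableSet_Ioc).mono fun u hu => (hbound u hu.1).trans ?_)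
    calc u ^ (-p - 1) * min u 1 ≤ u ^ (-p - 1) * u :=
          mul_le_mul_of_nonneg_left (min_le_left _ _) (Real.rpow_nonneg hu.1.le _)
      _ = u ^ (-p) := by rw [← Real.rpow_add_one hu.1.ne']; ring_nf
  have hfar : IntegrableOn g (Ioi 1) := by
    refine (integrableOn_Ioi_rpow_of_lt (a := -p - 1) (by linarith) one_pos).mono' hg.restrict
      ((ae_restrict_mem measurableSet_Ioi).mono fun u (hu : 1 < u) => ?_)
    exact (hbound u (one_pos.trans hu)).trans
      (mul_le_of_le_one_right (by positivity) (min_le_right _ _))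
  rw [← Ioc_union_Ioi_eq_Ioi zero_le_one]
  exact hnear.union hfar

lemma oneSubExpMellin_lt_top {p : ℝ} (hp0 : 0 < p) (hp1 : p < 1) : oneSubExpMellin p < ∞ := by
  refine lt_of_eq_of_lt (setLIntegral_congr_fun measurableSet_Ioi fun u (hu : 0 < u) => ?_)
    (integrableOn_rpow_mul_one_sub_exp_neg hp0 hp1).lintegral_lt_top
  exact (ENNReal.ofReal_mul (Real.rpow_nonneg hu.le _)).symm

lemma ofReal_rpow_mul_oneSubExpMellin {p x : ℝ} (hp : 0 < p) (hx : 0 ≤ x) :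
    ENNReal.ofReal (x ^ p) * oneSubExpMellin p =
      ∫⁻ l in Ioi 0, ENNReal.ofReal (l ^ (-p - 1)) * ENNReal.ofReal (1 - Real.exp (-l * x)) := by
  rcases hx.eq_or_lt with rfl | hx
  · simp [Real.zero_rpow hp.ne']
  · simp_rw [oneSubExpMellin, neg_mul, mul_comm _ x]
    exact (lintegral_Ioi_rpow_mul_comp_mul
      (fun u => ENNReal.ofReal (1 - Real.exp (-u))) p hx).symm

section LaplaceTransform

variable {Ω : Type*} [MeasurableSpace Ω] (μ : Measure Ω) [IsProbabilityMeasure μ] {Y : Ω → ℝ}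

lemma lintegral_ofReal_one_sub_exp_neg_mul (hY : Measurable Y) (hY0 : ∀ᵐ ω ∂μ, 0 ≤ Y ω)
    {l : ℝ} (hl : 0 ≤ l) :
    ∫⁻ ω, ENNReal.ofReal (1 - Real.exp (-l * Y ω)) ∂μ =
      ENNReal.ofReal (1 - ∫ ω, Real.exp (-l * Y ω) ∂μ) := by
  have hexp_le : ∀ᵐ ω ∂μ, Real.exp (-l * Y ω) ≤ 1 :=
    hY0.mono fun ω hω => Real.exp_le_one_iff.2 (by nlinarith)
  have hexp : Integrable (fun ω => Real.exp (-l * Y ω)) μ :=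
    .of_bound (by fun_prop) 1 (hexp_le.mono fun ω hω => by
      rwa [Real.norm_eq_abs, abs_of_pos (Real.exp_pos _)])
  have hmean : ∫ ω, (1 - Real.exp (-l * Y ω)) ∂μ = 1 - ∫ ω, Real.exp (-l * Y ω) ∂μ := by
    rw [integral_sub (integrable_const 1) hexp, integral_const, probReal_univ, one_smul]
  have hint : Integrable (fun ω => 1 - Real.exp (-l * Y ω)) μ := (integrable_const 1).sub hexp
  rw [← hmean,
    ofReal_integral_eq_lintegral_ofReal hint (hexp_le.mono fun ω hω => sub_nonneg.2 hω)]

lemma lintegral_ofReal_rpow_mul_oneSubExpMellin (hY : Measurable Y) (hY0 : ∀ᵐ ω ∂μ, 0 ≤ Y ω)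
    {p : ℝ} (hp : 0 < p) :
    (∫⁻ ω, ENNReal.ofReal (Y ω ^ p) ∂μ) * oneSubExpMellin p =
      ∫⁻ l in Ioi 0, ENNReal.ofReal (l ^ (-p - 1)) *
        ENNReal.ofReal (1 - ∫ ω, Real.exp (-l * Y ω) ∂μ) := by
  calc (∫⁻ ω, ENNReal.ofReal (Y ω ^ p) ∂μ) * oneSubExpMellin p
      = ∫⁻ ω, (∫⁻ l in Ioi 0, ENNReal.ofReal (l ^ (-p - 1)) *
          ENNReal.ofReal (1 - Real.exp (-l * Y ω))) ∂μ := by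
        rw [← lintegral_mul_const _ (by fun_prop)]
        exact lintegral_congr_ae (hY0.mono fun ω hω => ofReal_rpow_mul_oneSubExpMellin hp hω)
    _ = ∫⁻ l in Ioi 0, ∫⁻ ω, ENNReal.ofReal (l ^ (-p - 1)) *
          ENNReal.ofReal (1 - Real.exp (-l * Y ω)) ∂μ :=
        lintegral_lintegral_swap (by fun_prop)
    _ = _ := by
        refine setLIntegral_congr_fun measurableSet_Ioi fun l (hl : 0 < l) => ?_
        rw [lintegral_const_mul _ (by fun_prop),
          lintegral_ofReal_one_sub_exp_neg_mul μ hY hY0 hl.le]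

end LaplaceTransform

namespace StableSubordinator

variable {Ω : Type*} [MeasureSpace Ω] [IsProbabilityMeasure (ℙ : Measure Ω)] {α : ℝ}
  (X : StableSubordinator Ω α)

lemma nonneg : ∀ᵐ ω, ∀ t, 0 ≤ X.S t ω := by
  filter_upwards [X.path] with ω hω t
  rcases le_or_gt t 0 with ht | ht
  · exact (X.zero_of_nonpos t ht ω).ge
  · simpa only [X.zero_of_nonpos 0 le_rfl ω] using hω.1 ht.le

lemma lintegral_ofReal_rpow_mul_oneSubExpMellin (hα : α ≠ 0) {p : ℝ} (hp : 0 < p) {t : ℝ}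
    (ht : 0 < t) :
    (∫⁻ ω, ENNReal.ofReal (X.S t ω ^ p)) * oneSubExpMellin p =
      ENNReal.ofReal (t ^ (p / α)) *
        ∫⁻ u in Ioi 0, ENNReal.ofReal (u ^ (-p - 1)) * ENNReal.ofReal (1 - Real.exp (-u ^ α)) := by
  have hscale : ∀ l : ℝ, 0 < l → t * l ^ α = (t ^ α⁻¹ * l) ^ α := fun l hl => by
    rw [Real.mul_rpow (by positivity) hl.le, ← Real.rpow_mul ht.le, inv_mul_cancel₀ hα,
      Real.rpow_one]
  rw [_root_.lintegral_ofReal_rpow_mul_oneSubExpMellin ℙ (X.measurable t)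
      (X.nonneg.mono fun ω hω => hω t) hp,
    setLIntegral_congr_fun measurableSet_Ioi fun l (hl : 0 < l) => by
      rw [X.laplace l hl t ht.le, neg_mul, hscale l hl],
    lintegral_Ioi_rpow_mul_comp_mul (fun u => ENNReal.ofReal (1 - Real.exp (-u ^ α))) p
      (Real.rpow_pos_of_pos ht _), ← Real.rpow_mul ht.le, inv_mul_eq_div]

lemma lintegral_ofReal_rpow (hα : α ≠ 0) {p : ℝ} (hp0 : 0 < p) (hp1 : p < 1) {t : ℝ}
    (ht : 0 < t) :
    ∫⁻ ω, ENNReal.ofReal (X.S t ω ^ p) =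
      ENNReal.ofReal (t ^ (p / α)) * ∫⁻ ω, ENNReal.ofReal (X.S 1 ω ^ p) := by
  have h1 := X.lintegral_ofReal_rpow_mul_oneSubExpMellin hα hp0 one_pos
  rw [Real.one_rpow, ENNReal.ofReal_one, one_mul] at h1
  rw [← ENNReal.mul_left_inj (oneSubExpMellin_pos p).ne' (oneSubExpMellin_lt_top hp0 hp1).ne,
    mul_assoc, h1, X.lintegral_ofReal_rpow_mul_oneSubExpMellin hα hp0 ht]

lemma lintegral_rpow_setLIntegral_Ioc_le (hα : α ≠ 0) {T θ p : ℝ} (hT : 0 < T) (hθ : -1 ≤ θ)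
    (hp0 : 0 < p) (hp1 : p < 1) :
    ∫⁻ ω, (∫⁻ r in Ioc 0 T, ENNReal.ofReal (r ^ (-θ - 1) * X.S r ω)) ^ p ≤
      ∑' k : ℕ, ENNReal.ofReal ((2 / T) ^ (θ * p) * T ^ (p / α) *
        (2 : ℝ) ^ ((k : ℝ) * p * (θ - 1 / α))) * ∫⁻ ω, ENNReal.ofReal (X.S 1 ω ^ p) := by
  have hmeas : ∀ k : ℕ, Measurable fun ω => ENNReal.ofReal (X.S (T / 2 ^ k) ω ^ p) :=
    fun k => ((X.measurable _).pow_const p).ennreal_ofReal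
  calc ∫⁻ ω, (∫⁻ r in Ioc 0 T, ENNReal.ofReal (r ^ (-θ - 1) * X.S r ω)) ^ p
      ≤ ∫⁻ ω, ∑' k : ℕ, ENNReal.ofReal ((T / 2 ^ (k + 1)) ^ (-θ * p)) *
          ENNReal.ofReal (X.S (T / 2 ^ k) ω ^ p) := by
        refine lintegral_mono_ae ?_
        filter_upwards [X.path, X.nonneg] with ω hω hω0
        exact rpow_setLIntegral_Ioc_le_tsum_dyadic hω.1 hω0 hT hθ hp0 hp1.le
    _ = _ := by
        rw [lintegral_tsum fun k => ((hmeas k).const_mul _).aemeasurable]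
        refine tsum_congr fun k => ?_
        rw [lintegral_const_mul _ (hmeas k), X.lintegral_ofReal_rpow hα hp0 hp1 (by positivity),
          ← mul_assoc, ← ENNReal.ofReal_mul (by positivity), dyadic_weight_eq hT]

end StableSubordinator

/-- If `θ ∈ (0, 1/α)` and `p ∈ (0, α)`, then for every `T > 0` and `ε ∈ (0, T)`,
`E[(∫_ε^T r^(-θ-1) S_r dr)^p] ≤ E[S_1^p] (2/T)^(θp) T^(p/α) ∑_{k=0}^∞ 2^(kp(θ-1/α))`,
where the geometric series equals `1/(1 - 2^(p(θ-1/α)))` and is finite. -/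
theorem truncated_integral_moment_bound {Ω : Type*} [MeasureSpace Ω]
    [IsProbabilityMeasure (ℙ : Measure Ω)] {α : ℝ} (hα : α ∈ Set.Ioo (0 : ℝ) 1)
    (X : StableSubordinator Ω α) {θ p : ℝ} (hθ : θ ∈ Set.Ioo 0 (1 / α))
    (hp : p ∈ Set.Ioo 0 α) :
    ∀ T : ℝ, 0 < T → ∀ ε ∈ Set.Ioo 0 T,
      (∫⁻ ω, (∫⁻ r in Set.Ioo ε T, ENNReal.ofReal (r ^ (-θ - 1) * X.S r ω)) ^ p ∂ℙ ≤
          (∫⁻ ω, ENNReal.ofReal (X.S 1 ω ^ p) ∂ℙ) *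
            ENNReal.ofReal ((2 / T) ^ (θ * p) * T ^ (p / α) *
              ∑' k : ℕ, (2 : ℝ) ^ ((k : ℝ) * p * (θ - 1 / α)))) ∧
        ∑' k : ℕ, (2 : ℝ) ^ ((k : ℝ) * p * (θ - 1 / α)) =
          1 / (1 - (2 : ℝ) ^ (p * (θ - 1 / α))) := by
  obtain ⟨hα0, hα1⟩ := hα
  obtain ⟨hθ0, hθα⟩ := hθ
  obtain ⟨hp0, hpα⟩ := hp
  intro T hT ε hε
  have hgeom : HasSum (fun k : ℕ => (2 : ℝ) ^ ((k : ℝ) * p * (θ - 1 / α)))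
      (1 - (2 : ℝ) ^ (p * (θ - 1 / α)))⁻¹ := by
    simpa only [mul_assoc] using hasSum_rpow_natCast_mul zero_le_two
      (Real.rpow_lt_one_of_one_lt_of_neg one_lt_two (mul_neg_of_pos_of_neg hp0 (by linarith)))
  refine ⟨?_, hgeom.tsum_eq.trans (one_div _).symm⟩
  calc ∫⁻ ω, (∫⁻ r in Ioo ε T, ENNReal.ofReal (r ^ (-θ - 1) * X.S r ω)) ^ p
      ≤ ∫⁻ ω, (∫⁻ r in Ioc 0 T, ENNReal.ofReal (r ^ (-θ - 1) * X.S r ω)) ^ p :=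
        lintegral_mono fun ω => ENNReal.rpow_le_rpow
          (lintegral_mono_set (Ioo_subset_Ioc_self.trans (Ioc_subset_Ioc_left hε.1.le))) hp0.le
    _ ≤ _ := X.lintegral_rpow_setLIntegral_Ioc_le hα0.ne' hT (by linarith) hp0 (hpα.trans hα1)
    _ = _ := by
        rw [ENNReal.tsum_mul_right, ← tsum_mul_left, ← ENNReal.ofReal_tsum_of_nonneg
          (fun k => by positivity) (hgeom.summable.mul_left _), mul_comm]
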